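/- Under the fairness assumption — modeled as: for every state s on which π is defined and every effect outcome, executions selecting each outcome infinitely often at each infinitely-visited state — every infinite execution of a strong cyclic policy π from s0 almost surely (for any execution satisfying fairness) reaches a goal state. -/
import Mathlib


/-- An abstract FOND planning task: initial state, goal condition,
action applicability and non-deterministic successor sets. -/
structure FOND (S A : Type) where
  init : S
  goal : S → Prop
  applicable : S → A → Prop
  succs : S → A → Set S

/-- A policy is a partial function from states to actions. -/
abbrev Policy (S A : Type) := S → Option A

/-- A π-trajectory: a nonempty list of states where each next state is a
successor of the previous one under the (applicable) action chosen by π. -/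
def IsTraj {S A : Type} (T : FOND S A) (π : Policy S A) : List S → Prop
  | [] => False
  | [_] => True
  | s :: s' :: rest =>
      (∃ a, π s = some a ∧ T.applicable s a ∧ s' ∈ T.succs s a) ∧
      IsTraj T π (s' :: rest)

/-- π is closed: every π-trajectory from the initial state ends in a goal
state or in a state where π is defined. -/
def Closed {S A : Type} (T : FOND S A) (π : Policy S A) : Prop :=
  ∀ l : List S, IsTraj T π l → l.head? = some T.init →
    ∀ t, l.getLast? = some t → T.goal t ∨ (π t).isSome

/-- There is a π-trajectory from s ending in a goal state. -/
def ReachesGoal {S A : Type} (T : FOND S A) (π : Policy S A) (s : S) : Prop :=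
  ∃ l : List S, ∃ t, IsTraj T π l ∧ l.head? = some s ∧
    l.getLast? = some t ∧ T.goal t

/-- Strong policy: closed and no trajectory from the initial state passes
through a state more than once. -/
def StrongPolicy {S A : Type} (T : FOND S A) (π : Policy S A) : Prop :=
  Closed T π ∧
    ∀ l : List S, IsTraj T π l → l.head? = some T.init → l.Nodup

/-- Strong cyclic policy: closed and every trajectory from the initial state
not ending in a goal state ends in a state from which some trajectory
reaches a goal state. -/
def StrongCyclic {S A : Type} (T : FOND S A) (π : Policy S A) : Prop :=
  Closed T π ∧
    ∀ l : List S, ∀ t, IsTraj T π l → l.head? = some T.init →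
      l.getLast? = some t → ¬ T.goal t → ReachesGoal T π t

/-- An infinite execution of π from the initial state. -/
def Exec {S A : Type} (T : FOND S A) (π : Policy S A) (ρ : ℕ → S) : Prop :=
  ρ 0 = T.init ∧
    ∀ i, ∃ a, π (ρ i) = some a ∧ T.applicable (ρ i) a ∧
      ρ (i + 1) ∈ T.succs (ρ i) a

/-- Fairness: every state visited infinitely often has each outcome of its
policy action taken infinitely often. -/
def Fair {S A : Type} (T : FOND S A) (π : Policy S A) (ρ : ℕ → S) : Prop :=
  ∀ s : S, {i : ℕ | ρ i = s}.Infinite →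
    ∀ a, π s = some a → ∀ s' ∈ T.succs s a,
      {i : ℕ | ρ i = s ∧ ρ (i + 1) = s'}.Infinite

lemma traj_append {S A : Type} (T : FOND S A) (π : Policy S A) :
    ∀ (l : List S) (t s' : S), IsTraj T π l → l.getLast? = some t →
      (∃ a, π t = some a ∧ T.applicable t a ∧ s' ∈ T.succs t a) →
      IsTraj T π (l ++ [s']) := by
  intro l
  induction l with
  | nil => intro t s' htraj _ _; exact absurd htraj (by simp [IsTraj])
  | cons x l ih =>
    intro t s' htraj hlast hstep
    cases l with
    | nil =>
      simp at hlast
      subst hlast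
      exact ⟨hstep, trivial⟩
    | cons y rest =>
      obtain ⟨h1, h2⟩ := htraj
      have hlast' : (y :: rest).getLast? = some t := by
        simpa [List.getLast?_cons_cons] using hlast
      exact ⟨h1, ih t s' h2 hlast' hstep⟩

/-- under fairness, every infinite execution of a strong
cyclic policy from the initial state reaches a goal state. -/
theorem fair_execution_reaches_goal {S A : Type} [Fintype S]
    (T : FOND S A) (π : Policy S A) (h : StrongCyclic T π)
    (ρ : ℕ → S) (hexec : Exec T π ρ) (hfair : Fair T π ρ) :
    ∃ i : ℕ, T.goal (ρ i) := by
  by_contra hng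
  push_neg at hng
  -- prefix trajectories from init to any ρ i
  have hpref : ∀ i, ∃ l : List S, IsTraj T π l ∧ l.head? = some T.init ∧
      l.getLast? = some (ρ i) := by
    intro i
    induction i with
    | zero => exact ⟨[T.init], trivial, rfl, by simp [hexec.1]⟩
    | succ i ih =>
      obtain ⟨l, hl, hh, hlast⟩ := ih
      obtain ⟨a, ha⟩ := hexec.2 i
      refine ⟨l ++ [ρ (i + 1)], traj_append T π l (ρ i) (ρ (i + 1)) hl hlast ⟨a, ha⟩, ?_, ?_⟩
      · cases l with
        | nil => simp at hh
        | cons x l' => simpa using hh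
      · simp
  -- main descent argument
  have key : ∀ n, ∀ l : List S, ∀ s t : S, l.length ≤ n → IsTraj T π l →
      l.head? = some s → l.getLast? = some t → T.goal t →
      {i | ρ i = s}.Infinite → False := by
    intro n
    induction n with
    | zero =>
      intro l s t hlen htraj _ _ _ _
      cases l with
      | nil => exact htraj
      | cons => simp at hlen
    | succ n ih =>
      intro l s t hlen htraj hh hlast hgoal hinf
      cases l with
      | nil => exact htraj
      | cons x l' =>
        have hsx : s = x := by simpa using hh.symm
        subst hsx
        cases l' with
        | nil =>
          have hts : t = s := by simpa using hlast.symm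
          subst hts
          obtain ⟨i, hi⟩ := hinf.nonempty
          exact hng i (by rw [hi]; exact hgoal)
        | cons y rest =>
          obtain ⟨⟨a, hpa, _, hsucc⟩, htr⟩ := htraj
          have hinf2 := hfair s hinf a hpa y hsucc
          have hinf3 : {i | ρ i = y}.Infinite := by
            have himg := hinf2.image (f := fun i => i + 1)
              (by intro a _ b _ hab; simpa using hab)
            refine himg.mono ?_
            rintro j ⟨i, ⟨_, hi2⟩, rfl⟩
            exact hi2
          have hlast' : (y :: rest).getLast? = some t := by
            simpa [List.getLast?_cons_cons] using hlast
          exact ih (y :: rest) y t (by simp at hlen ⊢; omega) htr rfl hlast' hgoal hinf3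
  -- some state visited infinitely often
  obtain ⟨s, hs⟩ := Finite.exists_infinite_fiber ρ
  have hsinf : {i | ρ i = s}.Infinite := Set.infinite_coe_iff.mp hs
  obtain ⟨i, hi⟩ := hsinf.nonempty
  obtain ⟨l0, hl0, hh0, hlast0⟩ := hpref i
  obtain ⟨l, t, hlt, hlh, hll, hgt⟩ := h.2 l0 (ρ i) hl0 hh0 hlast0 (hng i)
  exact key l.length l (ρ i) t le_rfl hlt hlh hll hgt (by rw [hi]; exact hsinf)
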